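/- arXiv:math/0101020 — 6 statements merged into one kernel-verified Lean document; each statement's English description precedes it below -/
import Mathlib

section
/- Let k < n be positive integers, Q_k and Q_n the standard quadratic forms x ↦ ‖x‖² on EuclideanSpace ℝ (Fin k) and EuclideanSpace ℝ (Fin n), and ι the zero-extension isometry of quadratic forms from EuclideanSpace ℝ (Fin k) to EuclideanSpace ℝ (Fin n). Then the algebra homomorphism CliffordAlgebra.map ι maps the spin group spinGroup Q_k into the spin group spinGroup Q_n, and the resulting group homomorphism spinGroup Q_k → spinGroup Q_n is injective. (Lemma 2.9(2): SPIN(ℝ^k) is a natural subgroup of SPIN(ℝ^n).) -/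
open CliffordAlgebra
variable {R M₁ M₂ : Type*} [CommRing R] [AddCommGroup M₁] [AddCommGroup M₂]
  [Module R M₁] [Module R M₂] {Q₁ : QuadraticForm R M₁} {Q₂ : QuadraticForm R M₂}

theorem my_map_involute (f : Q₁ →qᵢ Q₂) (x : CliffordAlgebra Q₁) :
    map f (involute x) = involute (map f x) := by
  induction x using CliffordAlgebra.induction with
  | algebraMap r => simp
  | ι m => simp
  | mul a b ha hb => simp [map_mul, ha, hb]
  | add a b ha hb => simp [map_add, ha, hb]

theorem my_map_reverse (f : Q₁ →qᵢ Q₂) (x : CliffordAlgebra Q₁) :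
    map f (reverse x) = reverse (map f x) := by
  induction x using CliffordAlgebra.induction with
  | algebraMap r => simp
  | ι m => simp
  | mul a b ha hb => simp [map_mul, reverse.map_mul, ha, hb]
  | add a b ha hb => simp [map_add, ha, hb]

theorem my_map_star (f : Q₁ →qᵢ Q₂) (x : CliffordAlgebra Q₁) :
    map f (star x) = star (map f x) := by
  rw [star_def, star_def, my_map_reverse, my_map_involute]

theorem my_map_even (f : Q₁ →qᵢ Q₂) {x : CliffordAlgebra Q₁} (hx : x ∈ evenOdd Q₁ 0) :
    map f x ∈ evenOdd Q₂ 0 := by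
  induction x, hx using even_induction with
  | algebraMap r => simp; exact SetLike.algebraMap_mem_graded _ r
  | add a b ha hb hha hhb => rw [map_add]; exact add_mem hha hhb
  | ι_mul_ι_mul m₁ m₂ a ha hha =>
      rw [map_mul, map_mul, map_apply_ι, map_apply_ι]
      exact zero_add (0 : ZMod 2) ▸ SetLike.mul_mem_graded (ι_mul_ι_mem_evenOdd_zero _ _ _) hha

theorem my_map_lipschitz (f : Q₁ →qᵢ Q₂) {x : (CliffordAlgebra Q₁)ˣ}
    (hx : x ∈ lipschitzGroup Q₁) :
    Units.map (CliffordAlgebra.map f : CliffordAlgebra Q₁ →ₐ[R] CliffordAlgebra Q₂).toMonoidHom x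
      ∈ lipschitzGroup Q₂ := by
  unfold lipschitzGroup at hx ⊢
  induction hx using Subgroup.closure_induction with
  | mem g hg =>
    obtain ⟨m, hm⟩ := hg
    apply Subgroup.subset_closure
    refine ⟨f m, ?_⟩
    simp [← hm]
  | one => rw [map_one]; exact one_mem _
  | mul a b _ _ ha hb => rw [map_mul]; exact mul_mem ha hb
  | inv a _ ha => rw [map_inv]; exact inv_mem ha

theorem my_map_spin (f : Q₁ →qᵢ Q₂) {x : CliffordAlgebra Q₁}
    (hx : x ∈ spinGroup Q₁) : CliffordAlgebra.map f x ∈ spinGroup Q₂ := by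
  obtain ⟨⟨⟨u, hu, rfl⟩, hun⟩, hev⟩ := hx
  refine ⟨⟨⟨Units.map (CliffordAlgebra.map f).toMonoidHom u, my_map_lipschitz f hu, rfl⟩, ?_⟩, ?_⟩
  · constructor
    · rw [← my_map_star, ← map_mul, hun.1, map_one]
    · rw [← my_map_star, ← map_mul, hun.2, map_one]
  · exact my_map_even f hev
open CliffordAlgebra TensorProduct

section inl
variable {R M₁ M₂ : Type*} [Field R] [AddCommGroup M₁] [AddCommGroup M₂]
  [Module R M₁] [Module R M₂] (Q₁ : QuadraticForm R M₁) (Q₂ : QuadraticForm R M₂)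
  [Invertible (2 : R)]

theorem my_includeLeft_injective :
    Function.Injective (GradedTensorProduct.includeLeft (evenOdd Q₁) (evenOdd Q₂)) := by
  have h1 : (1 : CliffordAlgebra Q₂) ≠ 0 := one_ne_zero
  obtain ⟨φ, hφ⟩ : ∃ φ : CliffordAlgebra Q₂ →ₗ[R] R, φ 1 ≠ 0 := by
    by_contra h
    push_neg at h
    exact h1 ((Module.forall_dual_apply_eq_zero_iff R (1 : CliffordAlgebra Q₂)).mp h)
  set f : CliffordAlgebra Q₂ →ₗ[R] R := (φ 1)⁻¹ • φ with hf
  have hf1 : f 1 = 1 := by simp [hf, inv_mul_cancel₀ hφ]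
  intro a b hab
  simp_rw [GradedTensorProduct.includeLeft_apply, GradedTensorProduct.tmul] at hab
  have hab' := (GradedTensorProduct.of R (evenOdd Q₁) (evenOdd Q₂)).injective hab
  have := congrArg ((TensorProduct.rid R (CliffordAlgebra Q₁)).toLinearMap ∘ₗ
    LinearMap.lTensor (CliffordAlgebra Q₁) f) hab'
  simpa [hf1] using this

theorem my_map_inl_injective :
    Function.Injective (CliffordAlgebra.map (QuadraticMap.Isometry.inl Q₁ Q₂)) := by
  have h1 : (ofProd Q₁ Q₂).comp (CliffordAlgebra.map (QuadraticMap.Isometry.inl Q₁ Q₂))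
      = GradedTensorProduct.includeLeft (evenOdd Q₁) (evenOdd Q₂) := by
    apply CliffordAlgebra.hom_ext
    apply LinearMap.ext fun m => ?_
    simp only [AlgHom.comp_toLinearMap, LinearMap.coe_comp, Function.comp_apply,
      AlgHom.toLinearMap_apply, map_apply_ι, QuadraticMap.Isometry.inl_apply]
    show ofProd Q₁ Q₂ (ι _ (m, 0)) = _
    rw [ofProd_ι_mk, map_zero, GradedTensorProduct.includeLeft_apply]
    simp [GradedTensorProduct.tmul]
  have := my_includeLeft_injective Q₁ Q₂
  rw [← h1] at this
  exact Function.Injective.of_comp this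

end inl
open CliffordAlgebra

theorem euclid_normsq {m : ℕ} (v : EuclideanSpace ℝ (Fin m)) : ‖v‖ ^ 2 = ∑ i, v i ^ 2 := by
  rw [EuclideanSpace.norm_eq, Real.sq_sqrt (by positivity)]
  simp [Real.norm_eq_abs, sq_abs]

theorem my_map_euclid_injective
    (k n : ℕ) (hkn : k ≤ n)
    (Qk : QuadraticForm ℝ (EuclideanSpace ℝ (Fin k)))
    (Qn : QuadraticForm ℝ (EuclideanSpace ℝ (Fin n)))
    (hQk : ∀ x, Qk x = ‖x‖ ^ 2)
    (hQn : ∀ x, Qn x = ‖x‖ ^ 2)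
    (f : Qk →qᵢ Qn)
    (hf : ∀ (x : EuclideanSpace ℝ (Fin k)) (i : Fin n),
      f x i = if h : (i : ℕ) < k then x ⟨i, h⟩ else 0) :
    Function.Injective (CliffordAlgebra.map f) := by
  set r := n - k with hr
  set eqv : Fin k ⊕ Fin r ≃ Fin n := finSumFinEquiv.trans (finCongr (by omega)) with heqv
  have heqv_inl : ∀ a : Fin k, (eqv (Sum.inl a) : ℕ) = a := by
    intro a; simp [heqv]
  have heqv_inr : ∀ a : Fin r, (eqv (Sum.inr a) : ℕ) = k + a := by
    intro a; simp [heqv]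
  set e : (EuclideanSpace ℝ (Fin k) × EuclideanSpace ℝ (Fin r)) ≃ₗ[ℝ]
      EuclideanSpace ℝ (Fin n) :=
    ((WithLp.linearEquiv 2 ℝ (Fin k → ℝ)).prodCongr
        (WithLp.linearEquiv 2 ℝ (Fin r → ℝ))) ≪≫ₗ
      (LinearEquiv.sumArrowLequivProdArrow (Fin k) (Fin r) ℝ ℝ).symm ≪≫ₗ
      (LinearEquiv.funCongrLeft ℝ ℝ eqv).symm ≪≫ₗ
      (WithLp.linearEquiv 2 ℝ (Fin n → ℝ)).symm with he
  have he_apply : ∀ (x : EuclideanSpace ℝ (Fin k)) (y : EuclideanSpace ℝ (Fin r)) (i : Fin n),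
      e (x, y) i = Sum.elim x y (eqv.symm i) := by
    intro x y i
    rfl
  have hsum : ∀ (x : EuclideanSpace ℝ (Fin k)) (y : EuclideanSpace ℝ (Fin r)),
      ∑ i, (e (x, y) i) ^ 2 = (∑ j, x j ^ 2) + ∑ j, y j ^ 2 := by
    intro x y
    rw [← Equiv.sum_comp eqv (fun i => (e (x, y) i) ^ 2), Fintype.sum_sum_type]
    congr 1 <;>
      · apply Finset.sum_congr rfl
        intro a _
        rw [he_apply, Equiv.symm_apply_apply]
        simp
  set Qr : QuadraticForm ℝ (EuclideanSpace ℝ (Fin r)) :=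
    Qn.comp (e.toLinearMap ∘ₗ LinearMap.inr ℝ _ _) with hQr
  have hQr_apply : ∀ y, Qr y = ∑ j, y j ^ 2 := by
    intro y
    rw [hQr, QuadraticMap.comp_apply]
    show Qn (e (0, y)) = _
    rw [hQn, euclid_normsq, hsum]
    simp
  have hmap : ∀ p, Qn (e p) = (Qk.prod Qr) p := by
    intro p
    rw [QuadraticMap.prod_apply, hQn, hQk, hQr_apply, euclid_normsq, euclid_normsq,
      ← hsum p.1 p.2]
  let φ : (Qk.prod Qr).IsometryEquiv Qn := { e with map_app' := hmap }
  have hcomp : CliffordAlgebra.map f =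
      (equivOfIsometry φ).toAlgHom.comp
        (CliffordAlgebra.map (QuadraticMap.Isometry.inl Qk Qr)) := by
    apply CliffordAlgebra.hom_ext
    apply LinearMap.ext fun m => ?_
    simp only [AlgHom.comp_toLinearMap, LinearMap.coe_comp, Function.comp_apply,
      AlgHom.toLinearMap_apply, map_apply_ι, QuadraticMap.Isometry.inl_apply]
    show CliffordAlgebra.ι Qn (f m) =
      equivOfIsometry φ (CliffordAlgebra.ι (Qk.prod Qr) (m, 0))
    have : equivOfIsometry φ (CliffordAlgebra.ι (Qk.prod Qr) (m, 0)) =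
        CliffordAlgebra.map φ.toIsometry (CliffordAlgebra.ι (Qk.prod Qr) (m, 0)) := rfl
    rw [this, map_apply_ι]
    congr 1
    have he0 : φ.toIsometry (m, 0) = e (m, 0) := rfl
    rw [he0]
    refine PiLp.ext fun i => ?_
    rw [he_apply, hf]
    rcases h' : eqv.symm i with a | a
    · have hi : i = eqv (Sum.inl a) := by rw [← h', Equiv.apply_symm_apply]
      have hik : (i : ℕ) = (a : ℕ) := by rw [hi, heqv_inl]
      rw [dif_pos (by omega)]
      simp only [Sum.elim_inl]
      exact congrArg m.ofLp (Fin.ext hik : (⟨i, by omega⟩ : Fin k) = a)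
    · have hi : i = eqv (Sum.inr a) := by rw [← h', Equiv.apply_symm_apply]
      have hik : (i : ℕ) = k + (a : ℕ) := by rw [hi, heqv_inr]
      rw [dif_neg (by omega)]
      rfl
  rw [hcomp]
  exact (equivOfIsometry φ).injective.comp (my_map_inl_injective Qk Qr)


/-- Lemma 2.9(2): for `k < n`, `SPIN(ℝ^k)` is a natural subgroup of `SPIN(ℝ^n)`:
the induced map of Clifford algebras carries `spinGroup Q_k` into `spinGroup Q_n`,
injectively. -/
theorem spinGroup_inclusion
    (k n : ℕ) (hk : 0 < k) (hkn : k < n)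
    (Qk : QuadraticForm ℝ (EuclideanSpace ℝ (Fin k)))
    (Qn : QuadraticForm ℝ (EuclideanSpace ℝ (Fin n)))
    (hQk : ∀ x, Qk x = ‖x‖ ^ 2)
    (hQn : ∀ x, Qn x = ‖x‖ ^ 2)
    (ι : Qk →qᵢ Qn)
    (hι : ∀ (x : EuclideanSpace ℝ (Fin k)) (i : Fin n),
      ι x i = if h : (i : ℕ) < k then x ⟨i, h⟩ else 0) :
    (∀ x ∈ spinGroup Qk, CliffordAlgebra.map ι x ∈ spinGroup Qn) ∧
      Set.InjOn (CliffordAlgebra.map ι) (spinGroup Qk) := by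
  exact ⟨fun x hx => my_map_spin ι hx,
    (my_map_euclid_injective k n hkn.le Qk Qn hQk hQn ι hι).injOn⟩
end

section
/- Let 0 < k < n, let y : ℝ^k → EuclideanSpace ℝ (Fin n) be smooth with partial derivatives e_α(s) := ∂y/∂s^α(s), and let e_α̇ : ℝ^k → EuclideanSpace ℝ (Fin n) (α̇ ∈ Fin (n−k)) be smooth maps and Γ_α̇ : ℝ^k → Matrix (Fin k) (Fin k) ℝ smooth matrix-valued maps such that for all s: ⟨e_α̇(s), e_β̇(s)⟩ = δ_{α̇β̇}, ⟨e_α(s), e_β̇(s)⟩ = 0, and ∂e_β̇/∂s^α(s) = Σ_β (Γ_β̇(s))_{βα} e_β(s). Set g_{αβ}(s) := ⟨e_α(s), e_β(s)⟩ and x(s,q) := y(s) + Σ_α̇ q^α̇ e_α̇(s). Then for all (s,q) and all α, β ∈ Fin k: ⟨∂x/∂s^α(s,q), ∂x/∂s^β(s,q)⟩ = g_{αβ}(s) + Σ_α̇ q^α̇ [ (Γ_α̇(s)ᵀ g(s))_{αβ} + (g(s) Γ_α̇(s))_{αβ} ] + Σ_{α̇,β̇} q^α̇ q^β̇ (Γ_α̇(s)ᵀ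 g(s) Γ_β̇(s))_{αβ}. (Corollary 2.6(2): the induced metric on each leaf S_q is quadratic in q, formula (2-5).) -/
open scoped BigOperators RealInnerProductSpace

/-- Corollary 2.6(2), formula (2-5): the induced metric of the leaf `S_q` of the tubular
neighborhood is quadratic in `q`:
`g_{S_q,αβ} = g_{αβ} + Σ_α̇ q^α̇ ((Γ_α̇ᵀ g)_{αβ} + (g Γ_α̇)_{αβ}) + Σ_{α̇β̇} q^α̇ q^β̇ (Γ_α̇ᵀ g Γ_β̇)_{αβ}`. -/
theorem metric_of_leaf_quadratic_in_q
    (k n : ℕ) (hk : 0 < k) (hkn : k < n)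
    (y : (Fin k → ℝ) → EuclideanSpace ℝ (Fin n))
    (ed : Fin (n - k) → (Fin k → ℝ) → EuclideanSpace ℝ (Fin n))
    (Γ : Fin (n - k) → (Fin k → ℝ) → Matrix (Fin k) (Fin k) ℝ)
    (hy : ContDiff ℝ (⊤ : ℕ∞) y)
    (hed : ∀ αd, ContDiff ℝ (⊤ : ℕ∞) (ed αd))
    (hΓ : ∀ αd β γ, ContDiff ℝ (⊤ : ℕ∞) fun s => Γ αd s β γ)
    (horthonormal : ∀ (s : Fin k → ℝ) (αd βd : Fin (n - k)),
      ⟪ed αd s, ed βd s⟫ = if αd = βd then (1 : ℝ) else 0)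
    (horth : ∀ (s : Fin k → ℝ) (α : Fin k) (βd : Fin (n - k)),
      ⟪fderiv ℝ y s (Pi.single α 1), ed βd s⟫ = 0)
    (hWeingarten : ∀ (s : Fin k → ℝ) (α : Fin k) (βd : Fin (n - k)),
      fderiv ℝ (ed βd) s (Pi.single α 1) =
        ∑ β : Fin k, Γ βd s β α • fderiv ℝ y s (Pi.single β 1))
    (g : (Fin k → ℝ) → Matrix (Fin k) (Fin k) ℝ)
    (hg : ∀ (s : Fin k → ℝ) (α β : Fin k),
      g s α β = ⟪fderiv ℝ y s (Pi.single α 1), fderiv ℝ y s (Pi.single β 1)⟫)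
    (x : (Fin k → ℝ) × (Fin (n - k) → ℝ) → EuclideanSpace ℝ (Fin n))
    (hx : ∀ (s : Fin k → ℝ) (q : Fin (n - k) → ℝ),
      x (s, q) = y s + ∑ αd : Fin (n - k), q αd • ed αd s) :
    ∀ (s : Fin k → ℝ) (q : Fin (n - k) → ℝ) (α β : Fin k),
      ⟪fderiv ℝ x (s, q) (Pi.single α 1, 0), fderiv ℝ x (s, q) (Pi.single β 1, 0)⟫ =
        g s α β
          + ∑ αd : Fin (n - k), q αd *
              (((Γ αd s).transpose * g s) α β + (g s * Γ αd s) α β)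
          + ∑ αd : Fin (n - k), ∑ βd : Fin (n - k), q αd * q βd *
              (((Γ αd s).transpose * g s * Γ βd s) α β) := by
  have hx' : x = fun p => y p.1 + ∑ αd : Fin (n - k), p.2 αd • ed αd p.1 := by
    funext p
    rw [← hx p.1 p.2]
  intro s q α β
  -- derivative of x in tangent directions
  have hD : HasFDerivAt x
      (((fderiv ℝ y s).comp (ContinuousLinearMap.fst ℝ _ _)) +
        ∑ αd : Fin (n - k),
          (q αd • ((fderiv ℝ (ed αd) s).comp (ContinuousLinearMap.fst ℝ _ _)) +
            ((ContinuousLinearMap.proj αd).comp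
              (ContinuousLinearMap.snd ℝ (Fin k → ℝ) (Fin (n - k) → ℝ))).smulRight
                (ed αd s))) (s, q) := by
    rw [hx']
    have hy1 : HasFDerivAt (fun p : (Fin k → ℝ) × (Fin (n - k) → ℝ) => y p.1)
        ((fderiv ℝ y s).comp (ContinuousLinearMap.fst ℝ _ _)) (s, q) :=
      ((hy.differentiable (by simp) s).hasFDerivAt).comp (s, q) (hasFDerivAt_fst)
    refine hy1.add (HasFDerivAt.fun_sum fun αd _ => ?_)
    have hc : HasFDerivAt (fun p : (Fin k → ℝ) × (Fin (n - k) → ℝ) => p.2 αd)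
        ((ContinuousLinearMap.proj αd).comp
          (ContinuousLinearMap.snd ℝ (Fin k → ℝ) (Fin (n - k) → ℝ))) (s, q) :=
      ((ContinuousLinearMap.proj αd).comp
        (ContinuousLinearMap.snd ℝ (Fin k → ℝ) (Fin (n - k) → ℝ))).hasFDerivAt
    have hf : HasFDerivAt (fun p : (Fin k → ℝ) × (Fin (n - k) → ℝ) => ed αd p.1)
        ((fderiv ℝ (ed αd) s).comp (ContinuousLinearMap.fst ℝ _ _)) (s, q) :=
      (((hed αd).differentiable (by simp) s).hasFDerivAt).comp (s, q) (hasFDerivAt_fst)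
    exact hc.smul hf
  have key : ∀ γ : Fin k, fderiv ℝ x (s, q) (Pi.single γ 1, 0) =
      fderiv ℝ y s (Pi.single γ 1) +
        ∑ αd : Fin (n - k), q αd • fderiv ℝ (ed αd) s (Pi.single γ 1) := by
    intro γ
    rw [hD.fderiv]
    simp [ContinuousLinearMap.sum_apply]
  rw [key α, key β]
  simp only [hWeingarten]
  simp only [inner_add_add_self, inner_add_left, inner_add_right, sum_inner, inner_sum,
    real_inner_smul_left, real_inner_smul_right, ← hg, Matrix.mul_apply,
    Matrix.transpose_apply, Finset.mul_sum, Finset.sum_mul]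
  ring_nf
  have hA : (∑ x : Fin (n - k),
        (∑ x_1 : Fin k, q x * Γ x s x_1 β * g s α x_1 +
          ∑ x_1 : Fin (n - k), ∑ x_2 : Fin k, ∑ x_3 : Fin k,
            q x * Γ x s x_2 β * q x_1 * Γ x_1 s x_3 α * g s x_3 x_2)) =
      (∑ x : Fin (n - k), ∑ x_1 : Fin k, q x * Γ x s x_1 β * g s α x_1) +
      ∑ x : Fin (n - k), ∑ x_1 : Fin (n - k), ∑ x_2 : Fin k, ∑ x_3 : Fin k,
        q x * Γ x s x_2 β * q x_1 * Γ x_1 s x_3 α * g s x_3 x_2 := by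
    rw [Finset.sum_add_distrib]
  have hS : (∑ x : Fin (n - k), q x *
        (∑ x_1 : Fin k, Γ x s x_1 α * g s x_1 β + ∑ j : Fin k, g s α j * Γ x s j β)) =
      (∑ x : Fin (n - k), ∑ x_1 : Fin k, q x * Γ x s x_1 α * g s x_1 β) +
      ∑ x : Fin (n - k), ∑ x_1 : Fin k, q x * Γ x s x_1 β * g s α x_1 := by
    rw [← Finset.sum_add_distrib]
    refine Finset.sum_congr rfl fun i _ => ?_
    rw [mul_add, Finset.mul_sum, Finset.mul_sum]
    congr 1 <;> exact Finset.sum_congr rfl fun j _ => by ring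
  have hW : (∑ x : Fin (n - k), ∑ x_1 : Fin (n - k), ∑ x_2 : Fin k, ∑ x_3 : Fin k,
        q x * q x_1 * Γ x s x_3 α * g s x_3 x_2 * Γ x_1 s x_2 β) =
      ∑ x : Fin (n - k), ∑ x_1 : Fin (n - k), ∑ x_2 : Fin k, ∑ x_3 : Fin k,
        q x * Γ x s x_2 β * q x_1 * Γ x_1 s x_3 α * g s x_3 x_2 := by
    rw [Finset.sum_comm]
    exact Finset.sum_congr rfl fun i _ => Finset.sum_congr rfl fun j _ =>
      Finset.sum_congr rfl fun a _ => Finset.sum_congr rfl fun b _ => by ring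
  have hS2 : (∑ x : Fin (n - k), (q x * ∑ x_1 : Fin k, Γ x s x_1 α * g s x_1 β +
        q x * ∑ x_1 : Fin k, g s α x_1 * Γ x s x_1 β)) =
      ∑ x : Fin (n - k), q x *
        (∑ x_1 : Fin k, Γ x s x_1 α * g s x_1 β + ∑ j : Fin k, g s α j * Γ x s j β) := by
    simp only [mul_add]
  linarith
end

section
/- Let 0 < k < n, let y : ℝ^k → EuclideanSpace ℝ (Fin n) be smooth with partial derivatives e_α(s) := ∂y/∂s^α(s), and let e_α̇ : ℝ^k → EuclideanSpace ℝ (Fin n) (α̇ ∈ Fin (n−k)) be smooth maps and Γ_α̇ smooth matrix-valued maps such that for all s: ⟨e_α̇(s), e_β̇(s)⟩ = δ_{α̇β̇}, ⟨e_α(s), e_β̇(s)⟩ = 0, and ∂e_β̇/∂s^α(s) = Σ_β (Γ_β̇(s))_{βα} e_β(s). Set x(s,q) := y(s) + Σ_α̇ q^α̇ e_α̇(s). For fixed (s,q), let G_T be the n×n Gram matrix of the n vectors (∂x/∂s^1, …, ∂x/∂s^k, e_{k+1}(s), …, e_n(s)) (all evaluated at (s,q)), and let G_q be the k×k Gram matrix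 (⟨∂x/∂s^α(s,q), ∂x/∂s^β(s,q)⟩)_{αβ}. Then det G_T = det G_q. (Corollary 2.6(1): g_{T_S} ≡ g_{S_q}.) -/
open scoped BigOperators RealInnerProductSpace

/-- Corollary 2.6(1): `g_{T_S} ≡ g_{S_q}`.  The Gram determinant of the full moving frame
`(∂x/∂s^1, …, ∂x/∂s^k, e_{k+1}, …, e_n)` of the tubular neighborhood equals the Gram
determinant of the tangential frame `(∂x/∂s^α)` alone. -/
theorem gram_det_tubular_eq_gram_det_leaf
    (k n : ℕ) (hk : 0 < k) (hkn : k < n)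
    (y : (Fin k → ℝ) → EuclideanSpace ℝ (Fin n))
    (ed : Fin (n - k) → (Fin k → ℝ) → EuclideanSpace ℝ (Fin n))
    (Γ : Fin (n - k) → (Fin k → ℝ) → Matrix (Fin k) (Fin k) ℝ)
    (hy : ContDiff ℝ (⊤ : ℕ∞) y)
    (hed : ∀ αd, ContDiff ℝ (⊤ : ℕ∞) (ed αd))
    (hΓ : ∀ αd β γ, ContDiff ℝ (⊤ : ℕ∞) fun s => Γ αd s β γ)
    (horthonormal : ∀ (s : Fin k → ℝ) (αd βd : Fin (n - k)),
      ⟪ed αd s, ed βd s⟫ = if αd = βd then (1 : ℝ) else 0)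
    (horth : ∀ (s : Fin k → ℝ) (α : Fin k) (βd : Fin (n - k)),
      ⟪fderiv ℝ y s (Pi.single α 1), ed βd s⟫ = 0)
    (hWeingarten : ∀ (s : Fin k → ℝ) (α : Fin k) (βd : Fin (n - k)),
      fderiv ℝ (ed βd) s (Pi.single α 1) =
        ∑ β : Fin k, Γ βd s β α • fderiv ℝ y s (Pi.single β 1))
    (x : (Fin k → ℝ) × (Fin (n - k) → ℝ) → EuclideanSpace ℝ (Fin n))
    (hx : ∀ (s : Fin k → ℝ) (q : Fin (n - k) → ℝ),
      x (s, q) = y s + ∑ αd : Fin (n - k), q αd • ed αd s)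
    (s : Fin k → ℝ) (q : Fin (n - k) → ℝ)
    -- the full moving frame of the tubular neighborhood at `(s, q)`
    (v : Fin k ⊕ Fin (n - k) → EuclideanSpace ℝ (Fin n))
    (hv : v = Sum.elim (fun α => fderiv ℝ x (s, q) (Pi.single α 1, 0)) (fun αd => ed αd s))
    -- its Gram matrix `G_T` and the tangential Gram matrix `G_q`
    (GT : Matrix (Fin k ⊕ Fin (n - k)) (Fin k ⊕ Fin (n - k)) ℝ)
    (hGT : ∀ i j, GT i j = ⟪v i, v j⟫)
    (Gq : Matrix (Fin k) (Fin k) ℝ)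
    (hGq : ∀ α β, Gq α β =
      ⟪fderiv ℝ x (s, q) (Pi.single α 1, 0), fderiv ℝ x (s, q) (Pi.single β 1, 0)⟫) :
    GT.det = Gq.det := by
  classical
  have hx' : x = fun p => y p.1 + ∑ αd : Fin (n - k), p.2 αd • ed αd p.1 := by
    funext p; rcases p with ⟨s', q'⟩; exact hx s' q'
  have hyD : HasFDerivAt y (fderiv ℝ y s) s :=
    ((hy.differentiable (by simp)) s).hasFDerivAt
  have hedD : ∀ αd, HasFDerivAt (ed αd) (fderiv ℝ (ed αd) s) s :=
    fun αd => (((hed αd).differentiable (by simp)) s).hasFDerivAt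
  have hxD : HasFDerivAt x
      ((fderiv ℝ y s).comp (ContinuousLinearMap.fst ℝ (Fin k → ℝ) (Fin (n - k) → ℝ)) +
        ∑ αd : Fin (n - k),
          (q αd • (fderiv ℝ (ed αd) s).comp
              (ContinuousLinearMap.fst ℝ (Fin k → ℝ) (Fin (n - k) → ℝ)) +
            ((ContinuousLinearMap.proj αd).comp
              (ContinuousLinearMap.snd ℝ (Fin k → ℝ) (Fin (n - k) → ℝ))).smulRight (ed αd s)))
      (s, q) := by
    rw [hx']
    refine (hyD.comp (s, q) hasFDerivAt_fst).add
      (HasFDerivAt.fun_sum fun αd _ => ?_)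
    have hc : HasFDerivAt (fun p : (Fin k → ℝ) × (Fin (n - k) → ℝ) => p.2 αd)
        ((ContinuousLinearMap.proj αd).comp
          (ContinuousLinearMap.snd ℝ (Fin k → ℝ) (Fin (n - k) → ℝ))) (s, q) :=
      ((ContinuousLinearMap.proj αd).comp
        (ContinuousLinearMap.snd ℝ (Fin k → ℝ) (Fin (n - k) → ℝ))).hasFDerivAt
    exact hc.smul ((hedD αd).comp (s, q) hasFDerivAt_fst)
  have key : ∀ α : Fin k, fderiv ℝ x (s, q) (Pi.single α 1, 0) =
      fderiv ℝ y s (Pi.single α 1) +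
        ∑ γd : Fin (n - k), q γd • fderiv ℝ (ed γd) s (Pi.single α 1) := by
    intro α
    rw [hxD.fderiv]
    simp [ContinuousLinearMap.sum_apply]
  have hzero : ∀ (α : Fin k) (βd : Fin (n - k)),
      ⟪fderiv ℝ x (s, q) (Pi.single α 1, 0), ed βd s⟫ = 0 := by
    intro α βd
    rw [key α, inner_add_left, horth s α βd, zero_add, sum_inner]
    refine Finset.sum_eq_zero fun γd _ => ?_
    rw [real_inner_smul_left, hWeingarten s α γd, sum_inner, mul_eq_zero]
    right
    refine Finset.sum_eq_zero fun β _ => ?_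
    rw [real_inner_smul_left, horth s β βd, mul_zero]
  have hGTeq : GT = Matrix.fromBlocks Gq 0 0 1 := by
    ext i j
    rcases i with α | αd <;> rcases j with β | βd
    · simp [hGT, hv, hGq]
    · simp [hGT, hv, hzero]
    · simp only [hGT, hv, Sum.elim_inr, Sum.elim_inl, Matrix.fromBlocks_apply₂₁,
        Matrix.zero_apply]
      rw [real_inner_comm]; exact hzero β αd
    · simp [hGT, hv, horthonormal, Matrix.one_apply]
  rw [hGTeq, Matrix.det_fromBlocks_zero₂₁, Matrix.det_one, mul_one]
end

section
/- Let 0 < k < n, let y : ℝ^k → EuclideanSpace ℝ (Fin n) be smooth with partial derivatives e_α(s) := ∂y/∂s^α(s), and let e_α̇ : ℝ^k → EuclideanSpace ℝ (Fin n) (α̇ ∈ Fin (n−k)) and Γ_α̇ : ℝ^k → Matrix (Fin k) (Fin k) ℝ be smooth maps such that for all s: ∂e_β̇/∂s^α(s) = Σ_β (Γ_β̇(s))_{βα} e_β(s). Set g(s) := (⟨e_α(s), e_β(s)⟩)_{αβ} and x(s,q) := y(s) + Σ_α̇ q^α̇ e_α̇(s). Then for all (s,q): det ( ⟨∂x/∂s^α(s,q),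 ∂x/∂s^β(s,q)⟩ )_{αβ} = det g(s) · ( det( 1 + Σ_α̇ q^α̇ Γ_α̇(s) ) )², where 1 denotes the k×k identity matrix. (The exact factorization g_{S_q} = g_S · ρ_{S_q} underlying Corollary 2.6(3).) -/
open scoped BigOperators RealInnerProductSpace

/-- The exact factorization `g_{S_q} = g_S · ρ_{S_q}` underlying Corollary 2.6(3):
`det (⟨∂x/∂s^α, ∂x/∂s^β⟩)_{αβ} = det g(s) · (det(1 + Σ_α̇ q^α̇ Γ_α̇(s)))²`. -/
theorem leaf_metric_det_factorization
    (k n : ℕ) (hk : 0 < k) (hkn : k < n)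
    (y : (Fin k → ℝ) → EuclideanSpace ℝ (Fin n))
    (ed : Fin (n - k) → (Fin k → ℝ) → EuclideanSpace ℝ (Fin n))
    (Γ : Fin (n - k) → (Fin k → ℝ) → Matrix (Fin k) (Fin k) ℝ)
    (hy : ContDiff ℝ (⊤ : ℕ∞) y)
    (hed : ∀ αd, ContDiff ℝ (⊤ : ℕ∞) (ed αd))
    (hΓ : ∀ αd β γ, ContDiff ℝ (⊤ : ℕ∞) fun s => Γ αd s β γ)
    (hWeingarten : ∀ (s : Fin k → ℝ) (α : Fin k) (βd : Fin (n - k)),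
      fderiv ℝ (ed βd) s (Pi.single α 1) =
        ∑ β : Fin k, Γ βd s β α • fderiv ℝ y s (Pi.single β 1))
    (g : (Fin k → ℝ) → Matrix (Fin k) (Fin k) ℝ)
    (hg : ∀ (s : Fin k → ℝ) (α β : Fin k),
      g s α β = ⟪fderiv ℝ y s (Pi.single α 1), fderiv ℝ y s (Pi.single β 1)⟫)
    (x : (Fin k → ℝ) × (Fin (n - k) → ℝ) → EuclideanSpace ℝ (Fin n))
    (hx : ∀ (s : Fin k → ℝ) (q : Fin (n - k) → ℝ),
      x (s, q) = y s + ∑ αd : Fin (n - k), q αd • ed αd s) :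
    ∀ (s : Fin k → ℝ) (q : Fin (n - k) → ℝ),
      (Matrix.of fun α β : Fin k =>
          ⟪fderiv ℝ x (s, q) (Pi.single α 1, 0),
            fderiv ℝ x (s, q) (Pi.single β 1, 0)⟫).det =
        (g s).det *
          ((1 + ∑ αd : Fin (n - k), q αd • Γ αd s : Matrix (Fin k) (Fin k) ℝ).det) ^ 2 := by
  intro s q
  have hx' : x = fun p : (Fin k → ℝ) × (Fin (n - k) → ℝ) =>
      y p.1 + ∑ αd : Fin (n - k), p.2 αd • ed αd p.1 := by
    funext p
    cases p with
    | mk a b => exact hx a b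
  set A : Matrix (Fin k) (Fin k) ℝ := 1 + ∑ αd : Fin (n - k), q αd • Γ αd s with hA
  -- derivative of x in direction (Pi.single α 1, 0)
  have hfy : HasFDerivAt (fun p : (Fin k → ℝ) × (Fin (n - k) → ℝ) => y p.1)
      ((fderiv ℝ y s).comp (ContinuousLinearMap.fst ℝ (Fin k → ℝ) (Fin (n - k) → ℝ))) (s, q) :=
    ((hy.differentiable (by simp) s).hasFDerivAt).comp (s, q) (hasFDerivAt_fst)
  have hterm : ∀ αd : Fin (n - k),
      HasFDerivAt (fun p : (Fin k → ℝ) × (Fin (n - k) → ℝ) => p.2 αd • ed αd p.1)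
        (q αd • ((fderiv ℝ (ed αd) s).comp
            (ContinuousLinearMap.fst ℝ (Fin k → ℝ) (Fin (n - k) → ℝ))) +
          ((ContinuousLinearMap.proj αd).comp
            (ContinuousLinearMap.snd ℝ (Fin k → ℝ) (Fin (n - k) → ℝ))).smulRight (ed αd s))
        (s, q) := by
    intro αd
    have hc : HasFDerivAt (fun p : (Fin k → ℝ) × (Fin (n - k) → ℝ) => p.2 αd)
        ((ContinuousLinearMap.proj αd).comp
          (ContinuousLinearMap.snd ℝ (Fin k → ℝ) (Fin (n - k) → ℝ))) (s, q) :=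
      ((ContinuousLinearMap.proj αd).comp
        (ContinuousLinearMap.snd ℝ (Fin k → ℝ) (Fin (n - k) → ℝ))).hasFDerivAt
    have hf : HasFDerivAt (fun p : (Fin k → ℝ) × (Fin (n - k) → ℝ) => ed αd p.1)
        ((fderiv ℝ (ed αd) s).comp
          (ContinuousLinearMap.fst ℝ (Fin k → ℝ) (Fin (n - k) → ℝ))) (s, q) :=
      (((hed αd).differentiable (by simp) s).hasFDerivAt).comp (s, q) (hasFDerivAt_fst)
    exact hc.smul hf
  have hxd : HasFDerivAt x
      ((fderiv ℝ y s).comp (ContinuousLinearMap.fst ℝ (Fin k → ℝ) (Fin (n - k) → ℝ)) +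
        ∑ αd : Fin (n - k),
          (q αd • ((fderiv ℝ (ed αd) s).comp
              (ContinuousLinearMap.fst ℝ (Fin k → ℝ) (Fin (n - k) → ℝ))) +
            ((ContinuousLinearMap.proj αd).comp
              (ContinuousLinearMap.snd ℝ (Fin k → ℝ) (Fin (n - k) → ℝ))).smulRight (ed αd s)))
      (s, q) := by
    rw [hx']
    exact hfy.add (HasFDerivAt.fun_sum fun αd _ => hterm αd)
  have key : ∀ α : Fin k,
      fderiv ℝ x (s, q) ((Pi.single α 1 : Fin k → ℝ), (0 : Fin (n - k) → ℝ)) =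
        ∑ β : Fin k, A β α • fderiv ℝ y s (Pi.single β 1) := by
    intro α
    rw [hxd.fderiv]
    simp only [ContinuousLinearMap.add_apply, ContinuousLinearMap.coe_comp',
      Function.comp_apply, ContinuousLinearMap.coe_fst', ContinuousLinearMap.coe_snd',
      ContinuousLinearMap.sum_apply, ContinuousLinearMap.smul_apply,
      ContinuousLinearMap.smulRight_apply, ContinuousLinearMap.proj_apply,
      Pi.zero_apply, zero_smul, add_zero]
    have : ∀ αd : Fin (n - k), fderiv ℝ (ed αd) s (Pi.single α 1) =
        ∑ β : Fin k, Γ αd s β α • fderiv ℝ y s (Pi.single β 1) := fun αd => hWeingarten s α αd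
    simp only [this, hA]
    simp only [Matrix.add_apply, Matrix.one_apply, Matrix.sum_apply, Matrix.smul_apply,
      smul_eq_mul, add_smul, Finset.sum_add_distrib, Finset.smul_sum, smul_smul]
    rw [Finset.sum_comm]
    congr 1
    · simp [Finset.sum_ite_eq']
    · exact Finset.sum_congr rfl fun β _ => (Finset.sum_smul).symm
  have hM : (Matrix.of fun α β : Fin k =>
      ⟪fderiv ℝ x (s, q) ((Pi.single α 1 : Fin k → ℝ), (0 : Fin (n - k) → ℝ)),
        fderiv ℝ x (s, q) ((Pi.single β 1 : Fin k → ℝ), (0 : Fin (n - k) → ℝ))⟫) =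
      A.transpose * g s * A := by
    ext α β
    simp only [Matrix.of_apply, key, sum_inner, inner_sum, real_inner_smul_left,
      real_inner_smul_right, Matrix.mul_apply, Matrix.transpose_apply, Finset.sum_mul]
    refine Finset.sum_congr rfl fun γ _ => ?_
    refine Finset.sum_congr rfl fun δ _ => ?_
    rw [hg s δ γ]
    ring
  rw [hM, Matrix.det_mul, Matrix.det_mul, Matrix.det_transpose]
  ring
end

section
/- Let f, g, m, n, p : ℝ² → ℂ be differentiable functions satisfying the Dirac system (4-1): ∂g = −p f, ∂̄f = p̄ g, ∂n = −p̄ m, ∂̄m = p n, where ∂F := (∂₁F − i ∂₂F)/2 and ∂̄F := (∂₁F + i ∂₂F)/2. Then the identities ∂̄(f·m) + ∂(g·n) = 0 and ∂̄(f·n̄) − ∂(g·m̄) = 0 hold on ℝ²; that is, the complex 1-forms f m dz − g n dz̄ and f n̄ dz + g m̄ dz̄ are closed. (The closedness assertion underlying Proposition 4.2(2), the generalized Weierstrass representation of a conformal surface in E⁴.) -/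
open Complex

/-- partial derivative in the first coordinate direction -/
noncomputable def pd1 (F : ℝ × ℝ → ℂ) (z : ℝ × ℝ) : ℂ := fderiv ℝ F z (1, 0)

/-- partial derivative in the second coordinate direction -/
noncomputable def pd2 (F : ℝ × ℝ → ℂ) (z : ℝ × ℝ) : ℂ := fderiv ℝ F z (0, 1)

/-- Wirtinger derivative `∂F := (∂₁F − i ∂₂F)/2` -/
noncomputable def wd (F : ℝ × ℝ → ℂ) (z : ℝ × ℝ) : ℂ := (pd1 F z - Complex.I * pd2 F z) / 2

/-- Wirtinger derivative `∂̄F := (∂₁F + i ∂₂F)/2` -/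
noncomputable def wdbar (F : ℝ × ℝ → ℂ) (z : ℝ × ℝ) : ℂ := (pd1 F z + Complex.I * pd2 F z) / 2

lemma pd1_mul (F G : ℝ × ℝ → ℂ) (hF : Differentiable ℝ F) (hG : Differentiable ℝ G)
    (z : ℝ × ℝ) : pd1 (fun w => F w * G w) z = pd1 F z * G z + F z * pd1 G z := by
  simp [pd1, fderiv_fun_mul (hF z) (hG z)]; ring

lemma pd2_mul (F G : ℝ × ℝ → ℂ) (hF : Differentiable ℝ F) (hG : Differentiable ℝ G)
    (z : ℝ × ℝ) : pd2 (fun w => F w * G w) z = pd2 F z * G z + F z * pd2 G z := by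
  simp [pd2, fderiv_fun_mul (hF z) (hG z)]; ring

lemma pd1_conj (F : ℝ × ℝ → ℂ) (hF : Differentiable ℝ F) (z : ℝ × ℝ) :
    pd1 (fun w => (starRingEnd ℂ) (F w)) z = (starRingEnd ℂ) (pd1 F z) := by
  have : fderiv ℝ (fun w => (starRingEnd ℂ) (F w)) z
      = (Complex.conjCLE.toContinuousLinearMap).comp (fderiv ℝ F z) := by
    exact (Complex.conjCLE.toContinuousLinearMap.hasFDerivAt.comp z
      (hF z).hasFDerivAt).fderiv
  simp [pd1, this]

lemma pd2_conj (F : ℝ × ℝ → ℂ) (hF : Differentiable ℝ F) (z : ℝ × ℝ) :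
    pd2 (fun w => (starRingEnd ℂ) (F w)) z = (starRingEnd ℂ) (pd2 F z) := by
  have : fderiv ℝ (fun w => (starRingEnd ℂ) (F w)) z
      = (Complex.conjCLE.toContinuousLinearMap).comp (fderiv ℝ F z) := by
    exact (Complex.conjCLE.toContinuousLinearMap.hasFDerivAt.comp z
      (hF z).hasFDerivAt).fderiv
  simp [pd2, this]

lemma diff_conj (F : ℝ × ℝ → ℂ) (hF : Differentiable ℝ F) :
    Differentiable ℝ (fun w => (starRingEnd ℂ) (F w)) :=
  Complex.conjCLE.differentiable.comp hF

/-- The closedness assertion underlying Proposition 4.2(2): if `(f,g)` and `(m,n)` solve the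
Dirac system (4-1), `∂g = −p f`, `∂̄f = p̄ g`, `∂n = −p̄ m`, `∂̄m = p n`, then
`∂̄(fm) + ∂(gn) = 0` and `∂̄(f n̄) − ∂(g m̄) = 0`, i.e. the forms
`fm dz − gn dz̄` and `f n̄ dz + g m̄ dz̄` are closed. -/
theorem dirac_system_forms_closed
    (f g m n p : ℝ × ℝ → ℂ)
    (hf : Differentiable ℝ f) (hg : Differentiable ℝ g)
    (hm : Differentiable ℝ m) (hn : Differentiable ℝ n)
    (heq1 : ∀ z, wd g z = -(p z * f z))
    (heq2 : ∀ z, wdbar f z = (starRingEnd ℂ) (p z) * g z)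
    (heq3 : ∀ z, wd n z = -((starRingEnd ℂ) (p z) * m z))
    (heq4 : ∀ z, wdbar m z = p z * n z) :
    ∀ z : ℝ × ℝ,
      wdbar (fun w => f w * m w) z + wd (fun w => g w * n w) z = 0 ∧
      wdbar (fun w => f w * (starRingEnd ℂ) (n w)) z
        - wd (fun w => g w * (starRingEnd ℂ) (m w)) z = 0 := by
  intro z
  have e1 := heq1 z; have e2 := heq2 z; have e3 := heq3 z; have e4 := heq4 z
  simp only [wd, wdbar] at e1 e2 e3 e4 ⊢
  rw [pd1_mul f m hf hm, pd2_mul f m hf hm, pd1_mul g n hg hn, pd2_mul g n hg hn,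
    pd1_mul f _ hf (diff_conj n hn), pd2_mul f _ hf (diff_conj n hn),
    pd1_mul g _ hg (diff_conj m hm), pd2_mul g _ hg (diff_conj m hm),
    pd1_conj n hn, pd2_conj n hn, pd1_conj m hm, pd2_conj m hm]
  have e3' := congrArg (starRingEnd ℂ) e3
  have e4' := congrArg (starRingEnd ℂ) e4
  simp only [map_div₀, map_sub, map_add, map_mul, map_neg, map_ofNat, Complex.conj_I,
    Complex.conj_conj] at e3' e4'
  constructor
  · field_simp at e1 e2 e3 e4 ⊢
    linear_combination m z * e2 + f z * e4 + n z * e1 + g z * e3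
  · field_simp at e1 e2 e3' e4' ⊢
    linear_combination (starRingEnd ℂ) (n z) * e2 + f z * e3' - (starRingEnd ℂ) (m z) * e1 - g z * e4'
end

section
/- Let f, g, m, n : ℝ² → ℂ be functions and let Z₁, Z₂ : ℝ² → ℂ be differentiable functions satisfying ∂Z₁ = f·m, ∂̄Z₁ = −g·n, ∂Z₂ = f·n̄, ∂̄Z₂ = g·m̄ pointwise, where ∂F := (∂₁F − i ∂₂F)/2 and ∂̄F := (∂₁F + i ∂₂F)/2. Then the map X := (Z₁, Z₂) : ℝ² → ℂ² ≅ ℝ⁴ is conformal with conformal factor (|f|² + |g|²)(|m|² + |n|²): at every point, Re( ∂₁Z₁ · conj(∂₂Z₁) + ∂₁Z₂ · conj(∂₂Z₂) ) = 0 and |∂₁Z₁|² + |∂₁Z₂|² = |∂₂Z₁|² + |∂₂Z₂|² = (|f|² + |g|²)(|m|² + |n|²). -/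
open Complex

/-- The conformality condition `(|f|²+|g|²)(|m|²+|n|²) = ρ^{1/2}` in Proposition 4.2(2):
if `dZ₁ = fm dz − gn dz̄` and `dZ₂ = f n̄ dz + g m̄ dz̄`, then `X = (Z₁, Z₂) : ℝ² → ℂ² ≅ ℝ⁴`
is conformal with conformal factor `(|f|² + |g|²)(|m|² + |n|²)`. -/
theorem weierstrass_map_conformal
    (f g m n : ℝ × ℝ → ℂ)
    (Z₁ Z₂ : ℝ × ℝ → ℂ)
    (hZ₁ : Differentiable ℝ Z₁) (hZ₂ : Differentiable ℝ Z₂)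
    (h1 : ∀ z, wd Z₁ z = f z * m z)
    (h2 : ∀ z, wdbar Z₁ z = -(g z * n z))
    (h3 : ∀ z, wd Z₂ z = f z * (starRingEnd ℂ) (n z))
    (h4 : ∀ z, wdbar Z₂ z = g z * (starRingEnd ℂ) (m z)) :
    ∀ z : ℝ × ℝ,
      (pd1 Z₁ z * (starRingEnd ℂ) (pd2 Z₁ z)
        + pd1 Z₂ z * (starRingEnd ℂ) (pd2 Z₂ z)).re = 0 ∧
      Complex.normSq (pd1 Z₁ z) + Complex.normSq (pd1 Z₂ z) =
        (Complex.normSq (f z) + Complex.normSq (g z)) *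
          (Complex.normSq (m z) + Complex.normSq (n z)) ∧
      Complex.normSq (pd2 Z₁ z) + Complex.normSq (pd2 Z₂ z) =
        (Complex.normSq (f z) + Complex.normSq (g z)) *
          (Complex.normSq (m z) + Complex.normSq (n z)) := by
  intro z
  have e1 : pd1 Z₁ z = wd Z₁ z + wdbar Z₁ z := by simp [wd, wdbar]; ring
  have e2 : pd2 Z₁ z = Complex.I * (wd Z₁ z - wdbar Z₁ z) := by
    simp [wd, wdbar]; field_simp; ring_nf; simp [Complex.I_sq]
  have e3 : pd1 Z₂ z = wd Z₂ z + wdbar Z₂ z := by simp [wd, wdbar]; ring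
  have e4 : pd2 Z₂ z = Complex.I * (wd Z₂ z - wdbar Z₂ z) := by
    simp [wd, wdbar]; field_simp; ring_nf; simp [Complex.I_sq]
  rw [e1, e2, e3, e4, h1, h2, h3, h4]
  set a := f z; set b := g z; set c := m z; set d := n z
  refine ⟨?_, ?_, ?_⟩ <;>
  · simp only [Complex.normSq_apply, Complex.add_re, Complex.mul_re, Complex.mul_im,
      Complex.sub_re, Complex.sub_im, Complex.neg_re, Complex.neg_im, Complex.add_im,
      Complex.conj_re, Complex.conj_im, Complex.I_re, Complex.I_im, map_mul, map_sub,
      map_add, map_neg, Complex.conj_conj]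
    ring
end
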